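/- The function m ↦ E(m)/K(m) is strictly decreasing on [0,1), takes the value 1 at m = 0, and tends to 0 as m → 1 from the left. -/

import Mathlib

open Real

/-- Complete elliptic integral of the first kind `K(m) = ∫₀^{π/2} dθ/√(1 - m sin²θ)`. -/
noncomputable def ellK (m : ℝ) : ℝ :=
  ∫ θ in (0:ℝ)..(π / 2), 1 / Real.sqrt (1 - m * Real.sin θ ^ 2)

/-- Complete elliptic integral of the second kind `E(m) = ∫₀^{π/2} √(1 - m sin²θ) dθ`. -/
noncomputable def ellE (m : ℝ) : ℝ :=
  ∫ θ in (0:ℝ)..(π / 2), Real.sqrt (1 - m * Real.sin θ ^ 2)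

/-!
Pointwise in `θ`, the integrand of `E` decreases and that of `K` increases with `m`, strictly
at `θ = π/2`; so `E/K` is strictly decreasing, and both integrals equal `π/2` at `m = 0`.
For the limit, `E ≤ π/2` while `K(m) → ∞`: after the substitution `θ ↦ π/2 - θ` the
denominator is `√(1 - m cos²x) ≤ x + √(1 - m)`, so `K(m) ≥ log ((π/2 + √(1-m)) / √(1-m))`.
-/

open intervalIntegral Set Filter Topology

lemma one_sub_mul_sq_pos {m s : ℝ} (hm : m < 1) (hs : s ^ 2 ≤ 1) : 0 < 1 - m * s ^ 2 := by
  rcases le_or_gt m 0 with h | h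
  · nlinarith [sq_nonneg s]
  · nlinarith

lemma one_sub_mul_sin_sq_pos {m : ℝ} (hm : m < 1) (θ : ℝ) : 0 < 1 - m * sin θ ^ 2 :=
  one_sub_mul_sq_pos hm (sin_sq_le_one θ)

lemma continuous_sqrt_one_sub_mul_sin_sq (m : ℝ) : Continuous fun θ => √(1 - m * sin θ ^ 2) := by
  fun_prop

lemma continuous_one_div_sqrt_one_sub_mul_sq {m : ℝ} (hm : m < 1) {f : ℝ → ℝ}
    (hf : Continuous f) (hf₁ : ∀ x, f x ^ 2 ≤ 1) : Continuous fun x => 1 / √(1 - m * f x ^ 2) :=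
  continuous_const.div (by fun_prop) fun x => (sqrt_pos.2 (one_sub_mul_sq_pos hm (hf₁ x))).ne'

lemma continuous_one_div_sqrt_one_sub_mul_sin_sq {m : ℝ} (hm : m < 1) :
    Continuous fun θ => 1 / √(1 - m * sin θ ^ 2) :=
  continuous_one_div_sqrt_one_sub_mul_sq hm continuous_sin sin_sq_le_one

lemma ellE_pos {m : ℝ} (hm : m < 1) : 0 < ellE m :=
  intervalIntegral_pos_of_pos ((continuous_sqrt_one_sub_mul_sin_sq m).intervalIntegrable _ _)
    (fun θ => sqrt_pos.2 (one_sub_mul_sin_sq_pos hm θ)) pi_div_two_pos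

lemma ellK_pos {m : ℝ} (hm : m < 1) : 0 < ellK m :=
  intervalIntegral_pos_of_pos ((continuous_one_div_sqrt_one_sub_mul_sin_sq hm).intervalIntegrable _ _)
    (fun θ => one_div_pos.2 (sqrt_pos.2 (one_sub_mul_sin_sq_pos hm θ))) pi_div_two_pos

lemma ellE_zero : ellE 0 = π / 2 := by
  simp [ellE]

lemma ellK_zero : ellK 0 = π / 2 := by
  simp [ellK]

lemma ellE_strictAntiOn : StrictAntiOn ellE (Iio 1) := by
  intro m₁ _ m₂ (hm₂ : m₂ < 1) h
  refine integral_lt_integral_of_continuousOn_of_le_of_exists_lt pi_div_two_pos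
    (continuous_sqrt_one_sub_mul_sin_sq m₂).continuousOn
    (continuous_sqrt_one_sub_mul_sin_sq m₁).continuousOn
    (fun θ _ => sqrt_le_sqrt (by gcongr))
    ⟨π / 2, right_mem_Icc.2 pi_div_two_pos.le, ?_⟩
  simp only [sin_pi_div_two, one_pow, mul_one]
  exact sqrt_lt_sqrt (by linarith) (by linarith)

lemma ellK_strictMonoOn : StrictMonoOn ellK (Iio 1) := by
  intro m₁ hm₁ m₂ (hm₂ : m₂ < 1) h
  have hpos := one_sub_mul_sin_sq_pos hm₂
  refine integral_lt_integral_of_continuousOn_of_le_of_exists_lt pi_div_two_pos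
    (continuous_one_div_sqrt_one_sub_mul_sin_sq hm₁).continuousOn
    (continuous_one_div_sqrt_one_sub_mul_sin_sq hm₂).continuousOn
    (fun θ _ => one_div_le_one_div_of_le (sqrt_pos.2 (hpos θ))
      (sqrt_le_sqrt (by gcongr)))
    ⟨π / 2, right_mem_Icc.2 pi_div_two_pos.le, ?_⟩
  have := hpos (π / 2)
  simp only [sin_pi_div_two, one_pow, mul_one] at this ⊢
  exact one_div_lt_one_div_of_lt (sqrt_pos.2 this) (sqrt_lt_sqrt this.le (by linarith))

lemma ellK_eq_integral_cos (m : ℝ) :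
    ellK m = ∫ x in (0:ℝ)..(π / 2), 1 / √(1 - m * cos x ^ 2) := by
  simpa only [ellK, cos_pi_div_two_sub, sub_self, sub_zero] using
    integral_comp_sub_left (fun x => 1 / √(1 - m * cos x ^ 2)) (π / 2) (a := 0) (b := π / 2)

lemma sqrt_one_sub_mul_cos_sq_le {m x : ℝ} (hm : m ≤ 1) (hx : 0 ≤ x) :
    √(1 - m * cos x ^ 2) ≤ x + √(1 - m) := by
  have hc := sq_sqrt (sub_nonneg.2 hm)
  have hsin : m * sin x ^ 2 ≤ x ^ 2 :=
    (mul_le_of_le_one_left (sq_nonneg _) hm).trans sin_sq_le_sq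
  rw [← sqrt_sq (add_nonneg hx (sqrt_nonneg _))]
  refine sqrt_le_sqrt ?_
  nlinarith [sin_sq_add_cos_sq x, mul_nonneg hx (sqrt_nonneg (1 - m))]

lemma integral_one_div_add_const {c : ℝ} (hc : 0 < c) :
    ∫ x in (0:ℝ)..(π / 2), 1 / (x + c) = log ((π / 2 + c) / c) := by
  rw [integral_comp_add_right (fun y => 1 / y) c, zero_add,
    integral_one_div_of_pos hc (by positivity)]

lemma log_div_sqrt_le_ellK {m : ℝ} (hm : m < 1) :
    log ((π / 2 + √(1 - m)) / √(1 - m)) ≤ ellK m := by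
  have hc : 0 < √(1 - m) := sqrt_pos.2 (by linarith)
  rw [← integral_one_div_add_const hc, ellK_eq_integral_cos]
  refine integral_mono_on pi_div_two_pos.le (ContinuousOn.intervalIntegrable ?_)
    ((continuous_one_div_sqrt_one_sub_mul_sq hm continuous_cos cos_sq_le_one).intervalIntegrable _ _)
    fun x hx => one_div_le_one_div_of_le (sqrt_pos.2 (one_sub_mul_sq_pos hm (cos_sq_le_one x)))
      (sqrt_one_sub_mul_cos_sq_le hm.le hx.1)
  rw [uIcc_of_le pi_div_two_pos.le]
  exact continuousOn_const.div (by fun_prop) fun x hx => by linarith [hx.1]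

lemma tendsto_sqrt_one_sub_nhdsLT_one : Tendsto (fun m : ℝ => √(1 - m)) (𝓝[<] 1) (𝓝[>] 0) := by
  refine tendsto_nhdsWithin_iff.2 ⟨?_, ?_⟩
  · have h : Tendsto (fun m : ℝ => √(1 - m)) (𝓝 1) (𝓝 √(1 - 1)) :=
      (continuous_const.sub continuous_id).sqrt.tendsto 1
    simpa using h.mono_left nhdsWithin_le_nhds
  · filter_upwards [self_mem_nhdsWithin] with m (hm : m < 1)
    exact sqrt_pos.2 (by linarith)

lemma tendsto_log_add_div_self_nhdsGT_zero {a : ℝ} (ha : 0 < a) :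
    Tendsto (fun c : ℝ => log ((a + c) / c)) (𝓝[>] 0) atTop := by
  refine tendsto_log_atTop.comp ?_
  refine (tendsto_atTop_add_const_right _ 1 (tendsto_inv_nhdsGT_zero.const_mul_atTop ha)).congr' ?_
  filter_upwards [self_mem_nhdsWithin] with c (hc : 0 < c)
  field_simp

lemma ellK_tendsto_atTop : Tendsto ellK (𝓝[<] 1) atTop :=
  tendsto_atTop_mono' _ (eventually_nhdsWithin_of_forall fun _ hm => log_div_sqrt_le_ellK hm)
    ((tendsto_log_add_div_self_nhdsGT_zero pi_div_two_pos).comp tendsto_sqrt_one_sub_nhdsLT_one)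

/-- **Monotonicity and limits of `E/K`.**  The ratio `m ↦ E(m)/K(m)` is strictly
decreasing on `[0,1)`, equals `1` at `m = 0`, and tends to `0` as `m → 1⁻`. -/
theorem ellE_div_ellK_strictAnti_value_limit :
    StrictAntiOn (fun m => ellE m / ellK m) (Set.Ico (0:ℝ) 1) ∧
    ellE 0 / ellK 0 = 1 ∧
    Filter.Tendsto (fun m => ellE m / ellK m) (nhdsWithin 1 (Set.Iio 1)) (nhds 0) := by
  refine ⟨fun a ha b hb hab => ?_, by rw [ellE_zero, ellK_zero, div_self pi_div_two_pos.ne'], ?_⟩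
  · exact div_lt_div₀ (ellE_strictAntiOn ha.2 hb.2 hab) (ellK_strictMonoOn ha.2 hb.2 hab).le
      (ellE_pos ha.2).le (ellK_pos ha.2)
  · have hE_le : ∀ m ∈ Ico (0:ℝ) 1, ellE m ≤ π / 2 := fun m hm =>
      ellE_zero ▸ ellE_strictAntiOn.antitoneOn (show (0:ℝ) < 1 by norm_num) hm.2 hm.1
    have hIco : Ico (0:ℝ) 1 ∈ 𝓝[<] 1 := Ico_mem_nhdsLT_of_mem ⟨zero_lt_one, le_rfl⟩
    refine tendsto_of_tendsto_of_tendsto_of_le_of_le' tendsto_const_nhds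
      ((tendsto_const_nhds (x := π / 2)).div_atTop ellK_tendsto_atTop) ?_ ?_
    · filter_upwards [hIco] with m hm
      exact div_nonneg (ellE_pos hm.2).le (ellK_pos hm.2).le
    · filter_upwards [hIco] with m hm
      exact div_le_div_of_nonneg_right (hE_le m hm) (ellK_pos hm.2).le
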